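/- Let Φ : M_r → M_n be a linear map and let 1 ≤ k ≤ n. Then sup over all m ≥ 1 and all X ∈ M_m ⊗ M_r with ‖X‖ ≤ 1 of ‖(id_m ⊗ Φ)(X)‖_{S(k)} equals sup{ ‖(id_k ⊗ Φ)(X)‖ : X ∈ M_k ⊗ M_r with ‖X‖ ≤ 1 }. (This is Theorem 6.1: the completely bounded norm from M_r to the k-minimal operator space MIN^k(M_n) stabilizes and equals ‖id_k ⊗ Φ‖.) -/

import Mathlib

open scoped ComplexOrder Kronecker
open Matrix

noncomputable section

/-- The standard inner product `⟨v, w⟩ = ∑ conj(vᵢ) wᵢ` on `I → ℂ`. -/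
def inprod {I : Type*} [Fintype I] (v w : I → ℂ) : ℂ :=
  ∑ i, (starRingEnd ℂ) (v i) * w i

/-- `v` is a unit vector. -/
def UnitVec {I : Type*} [Fintype I] (v : I → ℂ) : Prop :=
  inprod v v = 1

/-- The Schmidt rank of a vector in `ℂ^I ⊗ ℂ^J`, i.e. the rank of the associated
`I × J` coefficient matrix. -/
noncomputable def SchmidtRank {I J : Type*} [Fintype I] [Fintype J] (v : I × J → ℂ) : ℕ :=
  (Matrix.of fun i j => v (i, j)).rank

/-- The operator norm (largest singular value) of a matrix, as
`sup { |⟨v, A w⟩| : v, w unit vectors }`. -/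
noncomputable def opNorm {I J : Type*} [Fintype I] [Fintype J] (A : Matrix I J ℂ) : ℝ :=
  sSup { t : ℝ | ∃ v w, UnitVec v ∧ UnitVec w ∧ t = ‖inprod v (A.mulVec w)‖ }

/-- The `S(k)`-norm of `X ∈ M_I ⊗ M_J`. -/
noncomputable def SNorm {I J : Type*} [Fintype I] [Fintype J] (k : ℕ)
    (X : Matrix (I × J) (I × J) ℂ) : ℝ :=
  sSup { t : ℝ | ∃ v w : I × J → ℂ, UnitVec v ∧ UnitVec w ∧
    SchmidtRank v ≤ k ∧ SchmidtRank w ≤ k ∧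
    t = ‖inprod v (X.mulVec w)‖ }

/-- `X` is a `k`-block positive (Hermitian) operator: `⟨v, X v⟩ ≥ 0` for every
vector of Schmidt rank at most `k`. -/
def kBlockPos {I J : Type*} [Fintype I] [Fintype J] (k : ℕ)
    (X : Matrix (I × J) (I × J) ℂ) : Prop :=
  X.IsHermitian ∧ ∀ v : I × J → ℂ, SchmidtRank v ≤ k → 0 ≤ inprod v (X.mulVec v)

/-- `ρ` has Schmidt number at most `k` (in particular it is positive semidefinite):
it is a finite nonnegative combination of rank-one projections onto vectors of
Schmidt rank at most `k`. -/
def SchmidtNumberLE {I J : Type*} [Fintype I] [Fintype J] (k : ℕ)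
    (ρ : Matrix (I × J) (I × J) ℂ) : Prop :=
  ∃ (N : ℕ) (c : Fin N → ℝ) (v : Fin N → (I × J → ℂ)),
    (∀ i, 0 ≤ c i) ∧ (∀ i, SchmidtRank (v i) ≤ k) ∧
    ρ = ∑ i, (c i : ℂ) • Matrix.vecMulVec (v i) (star (v i))

/-- `id_I ⊗ Φ` : the map applying `Φ` to the second tensor factor. -/
noncomputable def tensorId {I : Type*} [Fintype I] {a b : ℕ}
    (Φ : Matrix (Fin a) (Fin a) ℂ →ₗ[ℂ] Matrix (Fin b) (Fin b) ℂ)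
    (X : Matrix (I × Fin a) (I × Fin a) ℂ) : Matrix (I × Fin b) (I × Fin b) ℂ :=
  Matrix.of fun p q => Φ (Matrix.of fun s t => X (p.1, s) (q.1, t)) p.2 q.2

/-- The trace norm `‖X‖_tr = Tr √(X^* X)`. -/
noncomputable def trNorm {I : Type*} [Fintype I] [DecidableEq I] (X : Matrix I I ℂ) : ℝ :=
  (((Matrix.posSemidef_conjTranspose_mul_self X).1.eigenvectorUnitary : Matrix I I ℂ) *
    Matrix.diagonal (((↑) : ℝ → ℂ) ∘ Real.sqrt ∘ (Matrix.posSemidef_conjTranspose_mul_self X).1.eigenvalues) *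
    (star ((Matrix.posSemidef_conjTranspose_mul_self X).1.eigenvectorUnitary : Matrix I I ℂ))).trace.re

end

/-!
A vector `v ∈ ℂ^m ⊗ ℂ^n` of Schmidt rank at most `k` is `(V ⊗ 1) v'` with `V : ℂ^k → ℂ^m` a
contraction (an orthonormal basis of the column space of its coefficient matrix, padded with zero
columns) and `v' = (V^* ⊗ 1) v` of norm at most one. Since `id ⊗ Φ` commutes with the compressions
`X ↦ (V^* ⊗ 1) X (W ⊗ 1)`, every coefficient `⟨v, (id_m ⊗ Φ)(X) w⟩` with `v, w` of Schmidt rank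
at most `k` equals `⟨v', (id_k ⊗ Φ)(X') w'⟩` for the contraction `X' = (V^* ⊗ 1) X (W ⊗ 1)`.
Conversely, on `ℂ^k ⊗ ℂ^n` every vector has Schmidt rank at most `k`, so there the `S(k)`-norm is
the operator norm.
-/

open scoped Matrix.Norms.L2Operator InnerProductSpace

section Euclidean

variable {I J : Type*} [Fintype I] [Fintype J]

lemma inprod_eq_inner (v w : I → ℂ) :
    inprod v w = ⟪(WithLp.toLp 2 v : EuclideanSpace ℂ I), WithLp.toLp 2 w⟫_ℂ := by
  simp [inprod, EuclideanSpace.inner_toLp_toLp, dotProduct, mul_comm]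

lemma unitVec_iff_norm_eq_one (v : I → ℂ) :
    UnitVec v ↔ ‖(WithLp.toLp 2 v : EuclideanSpace ℂ I)‖ = 1 := by
  rw [UnitVec, inprod_eq_inner, inner_self_eq_norm_sq_to_K]
  norm_cast
  rw [← RCLike.ofReal_one, RCLike.ofReal_inj]
  exact pow_eq_one_iff_of_nonneg (norm_nonneg _) two_ne_zero

lemma inprod_mulVec_left (A : Matrix I J ℂ) (x : J → ℂ) (y : I → ℂ) :
    inprod (A *ᵥ x) y = inprod x (Aᴴ *ᵥ y) := by
  change star (A *ᵥ x) ⬝ᵥ y = star x ⬝ᵥ (Aᴴ *ᵥ y)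
  rw [Matrix.star_mulVec, Matrix.dotProduct_mulVec]

lemma opNorm_nonneg (A : Matrix I J ℂ) : 0 ≤ opNorm A :=
  Real.sSup_nonneg fun _ ⟨_, _, _, _, ht⟩ => ht ▸ norm_nonneg _

variable [DecidableEq J]

lemma norm_toLp_mulVec_le (A : Matrix I J ℂ) (x : J → ℂ) :
    ‖(WithLp.toLp 2 (A *ᵥ x) : EuclideanSpace ℂ I)‖ ≤
      ‖A‖ * ‖(WithLp.toLp 2 x : EuclideanSpace ℂ J)‖ :=
  A.l2_opNorm_mulVec _

lemma norm_inprod_mulVec_le (A : Matrix I J ℂ) (v : I → ℂ) (w : J → ℂ) :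
    ‖inprod v (A *ᵥ w)‖ ≤ ‖(WithLp.toLp 2 v : EuclideanSpace ℂ I)‖ *
      (‖A‖ * ‖(WithLp.toLp 2 w : EuclideanSpace ℂ J)‖) := by
  rw [inprod_eq_inner]
  exact (norm_inner_le_norm _ _).trans
    (mul_le_mul_of_nonneg_left (norm_toLp_mulVec_le A w) (norm_nonneg _))

lemma norm_inprod_mulVec_le_l2_opNorm (A : Matrix I J ℂ) {v : I → ℂ} {w : J → ℂ}
    (hv : UnitVec v) (hw : UnitVec w) : ‖inprod v (A *ᵥ w)‖ ≤ ‖A‖ := by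
  simpa [(unitVec_iff_norm_eq_one v).1 hv, (unitVec_iff_norm_eq_one w).1 hw] using
    norm_inprod_mulVec_le A v w

lemma opNorm_eq_l2_opNorm (A : Matrix I J ℂ) : opNorm A = ‖A‖ := by
  have hA : ‖A‖ ∈
      upperBounds {t : ℝ | ∃ v w, UnitVec v ∧ UnitVec w ∧ t = ‖inprod v (A *ᵥ w)‖} :=
    fun _ ⟨_, _, hv, hw, ht⟩ => ht ▸ norm_inprod_mulVec_le_l2_opNorm A hv hw
  refine le_antisymm (Real.sSup_le hA (norm_nonneg _)) ?_
  rw [Matrix.l2_opNorm_def]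
  refine ContinuousLinearMap.opNorm_le_of_re_inner_le (opNorm_nonneg A) fun x y hx hy => ?_
  calc _ ≤ ‖⟪_, y⟫_ℂ‖ := RCLike.re_le_norm _
    _ = ‖inprod y.ofLp (A *ᵥ x.ofLp)‖ := by rw [norm_inner_symm, inprod_eq_inner]; rfl
    _ ≤ opNorm A := le_csSup ⟨_, hA⟩
      ⟨_, _, (unitVec_iff_norm_eq_one _).2 hy, (unitVec_iff_norm_eq_one _).2 hx, rfl⟩

end Euclidean

section Isometry

variable {ι κ : Type*} [Fintype ι] [Fintype κ]

omit [Fintype ι] in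
lemma finrank_span_toLp_col (M : Matrix ι κ ℂ) :
    Module.finrank ℂ (Submodule.span ℂ (Set.range fun c => (WithLp.toLp 2 (M.col c) :
      EuclideanSpace ℂ ι))) = M.rank := by
  rw [Matrix.rank_eq_finrank_span_cols, ← LinearEquiv.finrank_map_eq
    (WithLp.linearEquiv 2 ℂ (ι → ℂ)), Submodule.map_span, ← Set.range_comp]
  rfl

lemma exists_isometry_mul_conjTranspose_mul_eq (M : Matrix ι κ ℂ) :
    ∃ B : Matrix ι (Fin M.rank) ℂ, Bᴴ * B = 1 ∧ B * Bᴴ * M = M := by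
  set T := Submodule.span ℂ (Set.range fun c => (WithLp.toLp 2 (M.col c) : EuclideanSpace ℂ ι))
  let b := (stdOrthonormalBasis ℂ T).reindex (finCongr (finrank_span_toLp_col M))
  refine ⟨Matrix.of fun i β => (b β : EuclideanSpace ℂ ι) i, ?_, ?_⟩
  · ext β γ
    have := orthonormal_iff_ite.1 b.orthonormal β γ
    rw [Submodule.coe_inner, EuclideanSpace.inner_eq_star_dotProduct] at this
    simpa [Matrix.mul_apply, Matrix.one_apply, dotProduct, mul_comm] using this
  · ext i c
    have hc : (WithLp.toLp 2 (M.col c) : EuclideanSpace ℂ ι) ∈ T :=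
      Submodule.subset_span ⟨c, rfl⟩
    have hrepr := congrArg (fun u : T => (u : EuclideanSpace ℂ ι) i) (b.sum_repr' ⟨_, hc⟩)
    simp only [Submodule.coe_inner, EuclideanSpace.inner_eq_star_dotProduct, dotProduct, col_apply,
      AddSubmonoidClass.coe_finsetSum, SetLike.val_smul, WithLp.ofLp_sum, WithLp.ofLp_smul,
      Finset.sum_apply, Pi.smul_apply, smul_eq_mul] at hrepr
    rw [← hrepr, Matrix.mul_assoc]
    simp [Matrix.mul_apply, mul_comm]

end Isometry

section L2OpNorm

variable {ι ι' κ : Type*} [Fintype ι] [Fintype ι'] [Fintype κ] [DecidableEq ι'] [DecidableEq κ]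

lemma l2_opNorm_le_one_of_conjTranspose_mul_self_eq_one {A : Matrix ι ι' ℂ} (hA : Aᴴ * A = 1) :
    ‖A‖ ≤ 1 := by
  have h1 : ‖(1 : Matrix ι' ι' ℂ)‖ ≤ 1 := by
    rw [Matrix.cstar_norm_def, map_one]
    exact ContinuousLinearMap.norm_id_le
  have := Matrix.l2_opNorm_conjTranspose_mul_self A
  rw [hA] at this
  nlinarith [norm_nonneg A]

lemma l2_opNorm_le_one_of_mul_conjTranspose_self_eq_one [DecidableEq ι] {A : Matrix ι ι' ℂ}
    (hA : A * Aᴴ = 1) : ‖A‖ ≤ 1 := by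
  rw [← Matrix.l2_opNorm_conjTranspose]
  exact l2_opNorm_le_one_of_conjTranspose_mul_self_eq_one
    (by rwa [Matrix.conjTranspose_conjTranspose])

omit [Fintype ι] [DecidableEq ι'] in
lemma kronecker_one_mulVec_apply (A : Matrix ι ι' ℂ) (x : ι' × κ → ℂ) (p : ι × κ) :
    (A ⊗ₖ (1 : Matrix κ κ ℂ) *ᵥ x) p = (A *ᵥ fun α => x (α, p.2)) p.1 := by
  simp [Matrix.mulVec, dotProduct, Matrix.one_apply, Fintype.sum_prod_type]

lemma l2_opNorm_kronecker_one_le (A : Matrix ι ι' ℂ) : ‖A ⊗ₖ (1 : Matrix κ κ ℂ)‖ ≤ ‖A‖ := by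
  rw [Matrix.l2_opNorm_def]
  refine ContinuousLinearMap.opNorm_le_bound _ (norm_nonneg _) fun x => ?_
  have hcol (s : κ) := norm_toLp_mulVec_le A fun α => x (α, s)
  rw [← sq_le_sq₀ (norm_nonneg _) (by positivity), mul_pow, EuclideanSpace.norm_sq_eq,
    EuclideanSpace.norm_sq_eq, Fintype.sum_prod_type_right, Fintype.sum_prod_type_right,
    Finset.mul_sum]
  refine Finset.sum_le_sum fun s _ => ?_
  have := pow_le_pow_left₀ (norm_nonneg _) (hcol s) 2
  rw [mul_pow, EuclideanSpace.norm_sq_eq, EuclideanSpace.norm_sq_eq] at this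
  simpa [kronecker_one_mulVec_apply] using this

end L2OpNorm

lemma exists_contraction_of_schmidtRank_le {ι κ : Type*} [Fintype ι] [Fintype κ] [DecidableEq κ]
    {k : ℕ} (v : ι × κ → ℂ) (hv : SchmidtRank v ≤ k) :
    ∃ V : Matrix ι (Fin k) ℂ, ‖V‖ ≤ 1 ∧ (V * Vᴴ) ⊗ₖ (1 : Matrix κ κ ℂ) *ᵥ v = v := by
  set M : Matrix ι κ ℂ := Matrix.of fun i j => v (i, j)
  obtain ⟨B, hB, hBM⟩ := exists_isometry_mul_conjTranspose_mul_eq M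
  set C : Matrix (Fin M.rank) (Fin k) ℂ :=
    (1 : Matrix (Fin k) (Fin k) ℂ).submatrix (Fin.castLE hv) id
  have hC : C * Cᴴ = 1 := by
    rw [Matrix.conjTranspose_submatrix, Matrix.conjTranspose_one,
      ← Matrix.submatrix_mul _ _ _ _ _ Function.bijective_id, Matrix.one_mul]
    exact Matrix.submatrix_one_embedding (Fin.castLEEmb hv)
  refine ⟨B * C, ?_, ?_⟩
  · calc ‖B * C‖ ≤ ‖B‖ * ‖C‖ := Matrix.l2_opNorm_mul B C
      _ ≤ 1 * 1 := mul_le_mul (l2_opNorm_le_one_of_conjTranspose_mul_self_eq_one hB)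
          (l2_opNorm_le_one_of_mul_conjTranspose_self_eq_one hC) (norm_nonneg _) zero_le_one
      _ = 1 := one_mul 1
  · have hvM : v = Matrix.vec Mᵀ := rfl
    rw [Matrix.conjTranspose_mul, Matrix.mul_assoc, ← Matrix.mul_assoc C, hC, Matrix.one_mul,
      hvM, Matrix.kronecker_mulVec_vec, Matrix.one_mul, ← Matrix.transpose_mul, hBM]

section TensorId

variable {ι ι' : Type*} [Fintype ι] [Fintype ι'] {a b : ℕ}
  (Φ : Matrix (Fin a) (Fin a) ℂ →ₗ[ℂ] Matrix (Fin b) (Fin b) ℂ)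

noncomputable def tensorIdLin :
    Matrix (ι × Fin a) (ι × Fin a) ℂ →ₗ[ℂ] Matrix (ι × Fin b) (ι × Fin b) ℂ where
  toFun := tensorId Φ
  map_add' X Y := by
    ext p q
    exact congr($(map_add Φ _ _) p.2 q.2)
  map_smul' c X := by
    ext p q
    exact congr($(map_smul Φ c _) p.2 q.2)

omit [Fintype ι'] in
lemma kronecker_one_mul_mul_kronecker_one_apply {α β : Type*} [Fintype α] [Fintype β]
    [DecidableEq α] [DecidableEq β] (A : Matrix ι' ι ℂ) (Y : Matrix (ι × α) (ι × β) ℂ)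
    (B : Matrix ι ι' ℂ) (p : ι' × α) (q : ι' × β) :
    (A ⊗ₖ (1 : Matrix α α ℂ) * Y * B ⊗ₖ (1 : Matrix β β ℂ)) p q =
      ∑ i, ∑ j, A p.1 i * Y (i, p.2) (j, q.2) * B j q.1 := by
  simp only [Matrix.mul_apply, kroneckerMap_apply, Matrix.one_apply, mul_ite, mul_one, mul_zero,
    ite_mul, zero_mul, Fintype.sum_prod_type, Finset.sum_ite_eq, Finset.mem_univ, if_true,
    Finset.sum_mul, Finset.sum_ite_eq']
  exact Finset.sum_comm

lemma tensorId_kronecker_one_mul_mul_kronecker_one (A : Matrix ι' ι ℂ)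
    (X : Matrix (ι × Fin a) (ι × Fin a) ℂ) (B : Matrix ι ι' ℂ) :
    tensorId Φ (A ⊗ₖ (1 : Matrix (Fin a) (Fin a) ℂ) * X * B ⊗ₖ (1 : Matrix (Fin a) (Fin a) ℂ)) =
      A ⊗ₖ (1 : Matrix (Fin b) (Fin b) ℂ) * tensorId Φ X * B ⊗ₖ (1 : Matrix (Fin b) (Fin b) ℂ) := by
  ext p q
  have hblock : (Matrix.of fun s t => (A ⊗ₖ (1 : Matrix (Fin a) (Fin a) ℂ) * X *
      B ⊗ₖ (1 : Matrix (Fin a) (Fin a) ℂ) : Matrix (ι' × Fin a) (ι' × Fin a) ℂ) (p.1, s) (q.1, t)) =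
      ∑ i, ∑ j, (A p.1 i * B j q.1) • Matrix.of fun s t => X (i, s) (j, t) := by
    ext s t
    simp [kronecker_one_mul_mul_kronecker_one_apply, Matrix.sum_apply, mul_right_comm]
  rw [kronecker_one_mul_mul_kronecker_one_apply]
  change Φ (Matrix.of fun s t => _) p.2 q.2 = _
  rw [hblock]
  simp only [map_sum, map_smul, Matrix.sum_apply, Matrix.smul_apply, smul_eq_mul, tensorId,
    Matrix.of_apply, mul_right_comm]

variable [DecidableEq ι]

lemma bddAbove_l2_opNorm_tensorId :
    BddAbove {t : ℝ | ∃ X : Matrix (ι × Fin a) (ι × Fin a) ℂ, ‖X‖ ≤ 1 ∧ t = ‖tensorId Φ X‖} := by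
  let L := LinearMap.toContinuousLinearMap (tensorIdLin (ι := ι) Φ)
  exact ⟨‖L‖, fun _ ⟨X, hX, ht⟩ =>
    ht ▸ (L.le_opNorm X).trans (mul_le_of_le_one_right (norm_nonneg _) hX)⟩

end TensorId

section SNorm

variable {ι κ : Type*} [Fintype ι] [Fintype κ]

lemma SNorm_nonneg (k : ℕ) (Y : Matrix (ι × κ) (ι × κ) ℂ) : 0 ≤ SNorm k Y :=
  Real.sSup_nonneg fun _ ⟨_, _, _, _, _, _, ht⟩ => ht ▸ norm_nonneg _

lemma SNorm_eq_opNorm_of_card_le {k : ℕ} (hk : Fintype.card ι ≤ k)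
    (Y : Matrix (ι × κ) (ι × κ) ℂ) : SNorm k Y = opNorm Y := by
  have hSR (v : ι × κ → ℂ) : SchmidtRank v ≤ k := (Matrix.rank_le_card_height _).trans hk
  simp only [SNorm, opNorm, hSR, true_and]

end SNorm

lemma exists_eq_kronecker_one_mulVec_of_schmidtRank_le {ι κ : Type*} [Fintype ι] [Fintype κ]
    [DecidableEq ι] [DecidableEq κ] {k : ℕ} {v : ι × κ → ℂ} (hv : UnitVec v)
    (hsv : SchmidtRank v ≤ k) :
    ∃ (V : Matrix ι (Fin k) ℂ) (v' : Fin k × κ → ℂ), ‖V‖ ≤ 1 ∧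
      ‖(WithLp.toLp 2 v' : EuclideanSpace ℂ (Fin k × κ))‖ ≤ 1 ∧
      v = V ⊗ₖ (1 : Matrix κ κ ℂ) *ᵥ v' := by
  obtain ⟨V, hV, hVv⟩ := exists_contraction_of_schmidtRank_le v hsv
  refine ⟨V, Vᴴ ⊗ₖ (1 : Matrix κ κ ℂ) *ᵥ v, hV, (norm_toLp_mulVec_le _ _).trans ?_, ?_⟩
  · rw [(unitVec_iff_norm_eq_one v).1 hv, mul_one]
    exact (l2_opNorm_kronecker_one_le _).trans (by rwa [Matrix.l2_opNorm_conjTranspose])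
  · rw [Matrix.mulVec_mulVec, ← Matrix.mul_kronecker_mul, Matrix.one_mul, hVv]

lemma exists_norm_inprod_tensorId_mulVec_le {ι : Type*} [Fintype ι] [DecidableEq ι] {r n k : ℕ}
    (Φ : Matrix (Fin r) (Fin r) ℂ →ₗ[ℂ] Matrix (Fin n) (Fin n) ℂ)
    {X : Matrix (ι × Fin r) (ι × Fin r) ℂ} (hX : ‖X‖ ≤ 1) {v w : ι × Fin n → ℂ}
    (hv : UnitVec v) (hw : UnitVec w) (hsv : SchmidtRank v ≤ k) (hsw : SchmidtRank w ≤ k) :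
    ∃ X' : Matrix (Fin k × Fin r) (Fin k × Fin r) ℂ, ‖X'‖ ≤ 1 ∧
      ‖inprod v (tensorId Φ X *ᵥ w)‖ ≤ ‖tensorId Φ X'‖ := by
  obtain ⟨V, v', hV, hv', rfl⟩ := exists_eq_kronecker_one_mulVec_of_schmidtRank_le hv hsv
  obtain ⟨W, w', hW, hw', rfl⟩ := exists_eq_kronecker_one_mulVec_of_schmidtRank_le hw hsw
  set X' := Vᴴ ⊗ₖ (1 : Matrix (Fin r) (Fin r) ℂ) * X * W ⊗ₖ (1 : Matrix (Fin r) (Fin r) ℂ)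
  refine ⟨X', ?_, ?_⟩
  · calc ‖X'‖ ≤ ‖Vᴴ ⊗ₖ (1 : Matrix (Fin r) (Fin r) ℂ)‖ * ‖X‖ *
          ‖W ⊗ₖ (1 : Matrix (Fin r) (Fin r) ℂ)‖ :=
          (Matrix.l2_opNorm_mul _ _).trans
            (mul_le_mul_of_nonneg_right (Matrix.l2_opNorm_mul _ _) (norm_nonneg _))
      _ ≤ 1 * 1 * 1 := by
          gcongr
          · exact (l2_opNorm_kronecker_one_le _).trans
              (by rwa [Matrix.l2_opNorm_conjTranspose])
          · exact (l2_opNorm_kronecker_one_le _).trans hW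
      _ = 1 := by norm_num
  · calc _ = ‖inprod v' (tensorId Φ X' *ᵥ w')‖ := by
          rw [tensorId_kronecker_one_mul_mul_kronecker_one, inprod_mulVec_left,
            Matrix.mulVec_mulVec, Matrix.mulVec_mulVec, Matrix.conjTranspose_kronecker,
            Matrix.conjTranspose_one]
      _ ≤ 1 * (‖tensorId Φ X'‖ * 1) := (norm_inprod_mulVec_le _ _ _).trans (by gcongr)
      _ = ‖tensorId Φ X'‖ := by ring

theorem cb_kMinimal_norm_stabilizes_general (r n k : ℕ) (hk : 1 ≤ k)
    (Φ : Matrix (Fin r) (Fin r) ℂ →ₗ[ℂ] Matrix (Fin n) (Fin n) ℂ) :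
    sSup { t : ℝ | ∃ (m : ℕ), 0 < m ∧ ∃ X : Matrix (Fin m × Fin r) (Fin m × Fin r) ℂ,
        opNorm X ≤ 1 ∧ t = SNorm k (tensorId Φ X) } =
      sSup { t : ℝ | ∃ X : Matrix (Fin k × Fin r) (Fin k × Fin r) ℂ,
        opNorm X ≤ 1 ∧ t = opNorm (tensorId Φ X) } := by
  simp only [opNorm_eq_l2_opNorm]
  set S := {t : ℝ | ∃ X : Matrix (Fin k × Fin r) (Fin k × Fin r) ℂ, ‖X‖ ≤ 1 ∧
    t = ‖tensorId Φ X‖}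
  have hS : BddAbove S := bddAbove_l2_opNorm_tensorId Φ
  have hS₀ : 0 ≤ sSup S := Real.sSup_nonneg fun _ ⟨_, _, ht⟩ => ht ▸ norm_nonneg _
  have hSNorm_le (m : ℕ) (X : Matrix (Fin m × Fin r) (Fin m × Fin r) ℂ) (hX : ‖X‖ ≤ 1) :
      SNorm k (tensorId Φ X) ≤ sSup S := by
    refine Real.sSup_le (fun _ ⟨v, w, hv, hw, hsv, hsw, ht⟩ => ?_) hS₀
    obtain ⟨X', hX', hvw⟩ := exists_norm_inprod_tensorId_mulVec_le Φ hX hv hw hsv hsw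
    exact ht ▸ hvw.trans (le_csSup hS ⟨X', hX', rfl⟩)
  refine le_antisymm (Real.sSup_le (fun _ ⟨m, _, X, hX, ht⟩ => ht ▸ hSNorm_le m X hX) hS₀) ?_
  refine Real.sSup_le (fun _ ⟨X, hX, ht⟩ => ?_)
    (Real.sSup_nonneg fun _ ⟨_, _, _, _, ht⟩ => ht ▸ SNorm_nonneg _ _)
  refine le_csSup ⟨sSup S, fun _ ⟨m, _, X, hX, ht⟩ => ht ▸ hSNorm_le m X hX⟩ ⟨k, hk, X, hX, ?_⟩
  rw [ht, SNorm_eq_opNorm_of_card_le (by simp), opNorm_eq_l2_opNorm]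

/-- Theorem 6.1: the completely bounded norm from `M_r` to the `k`-minimal operator space
`MIN^k(M_n)` stabilizes and equals `‖id_k ⊗ Φ‖`. -/
theorem cb_kMinimal_norm_stabilizes (r n k : ℕ) (hr : 0 < r) (hk : 1 ≤ k) (hkn : k ≤ n)
    (Φ : Matrix (Fin r) (Fin r) ℂ →ₗ[ℂ] Matrix (Fin n) (Fin n) ℂ) :
    sSup { t : ℝ | ∃ (m : ℕ), 0 < m ∧ ∃ X : Matrix (Fin m × Fin r) (Fin m × Fin r) ℂ,
        opNorm X ≤ 1 ∧ t = SNorm k (tensorId Φ X) } =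
      sSup { t : ℝ | ∃ X : Matrix (Fin k × Fin r) (Fin k × Fin r) ℂ,
        opNorm X ≤ 1 ∧ t = opNorm (tensorId Φ X) } :=
  cb_kMinimal_norm_stabilizes_general r n k hk Φ
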